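/- Let (S, ·) be a layered semigroup with layering map ℓ : S → ℕ and layers S_i = ℓ⁻¹({i}), let F be a collection of regressive maps on S, and let (U_i)_{i∈ℕ} be an F-coherent sequence of ultrafilters on S such that every U_i is idempotent (U_i·U_i = U_i). Then for every f ∈ F and every k ∈ ℕ there exists j ≤ k such that the pushforward ultrafilter Ultrafilter.map f (U_k · U_{k−1} · ⋯ · U_1 · U_0) equals U_j · U_{j−1} · ⋯ · U_1 · U_0 (products of ultrafilters taken in the indicated order). -/

import Mathlib

/-- A regressive map on a layered semigroup `(S, ·, ℓ)`. -/
def IsRegressive {S : Type*} [Semigroup S] (ℓ : S → ℕ) (f : S → S) : Prop :=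
  (∀ s t : S, f (s * t) = f s * f t) ∧
  (∀ s : S, ℓ (f s) ≤ ℓ s) ∧
  (∀ s t : S, ℓ s ≤ ℓ t → ℓ (f s) ≤ ℓ (f t)) ∧
  (∀ s t : S, |(ℓ (f s) : ℤ) - (ℓ (f t) : ℤ)| ≤ |(ℓ s : ℤ) - (ℓ t : ℤ)|)

/-- A collection of maps on `S` is locally finite if for every `i` the set of
restrictions to `ℓ⁻¹({0,…,i})` is finite. -/
def IsLocallyFinite {S : Type*} (ℓ : S → ℕ) (F : Set (S → S)) : Prop :=
  ∀ i : ℕ, Set.Finite { g : {s : S // ℓ s ≤ i} → S | ∃ f ∈ F, g = fun s => f s.val }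

/-- The product of two ultrafilters on a semigroup:
`A ∈ uMul U V ↔ {s | {t | s * t ∈ A} ∈ V} ∈ U`. -/
def uMul {S : Type*} [Semigroup S] (U V : Ultrafilter S) : Ultrafilter S :=
  U.bind fun s => V.map fun t => s * t

/-- A sequence of ultrafilters `U i` concentrated on the layers `S_i` is `F`-coherent if
it is closed under pushforwards along all maps in `F`. -/
def FCoherent {S : Type*} [Semigroup S] (ℓ : S → ℕ) (F : Set (S → S))
    (U : ℕ → Ultrafilter S) : Prop :=
  (∀ i : ℕ, {s : S | ℓ s = i} ∈ U i) ∧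
  (∀ f ∈ F, ∀ j : ℕ, ∃ k ≤ j, Ultrafilter.map f (U j) = U k)

/-- An `F`-coherent sequence is `F`-Ramsey if moreover `U j · U i = U i · U j = U j`
whenever `i ≤ j`. -/
def FRamsey {S : Type*} [Semigroup S] (ℓ : S → ℕ) (F : Set (S → S))
    (U : ℕ → Ultrafilter S) : Prop :=
  FCoherent ℓ F U ∧
  ∀ i j : ℕ, i ≤ j → uMul (U j) (U i) = U j ∧ uMul (U i) (U j) = U j

/-- Fold of a nonempty tuple from the left: `g 0 * g 1 * ⋯ * g m`. -/
def finFold {S : Type*} (op : S → S → S) (m : ℕ) (g : Fin (m + 1) → S) : S :=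
  (List.ofFn fun a : Fin m => g a.succ).foldl op (g 0)

/-- The set of all products `f₁(x_{n₁}) · ⋯ · f_ℓ(x_{n_ℓ})` with `ℓ ≥ 1`,
`n₁ < ⋯ < n_ℓ` and `f₁, …, f_ℓ ∈ F`. -/
def ComboSet {S : Type*} [Semigroup S] (F : Set (S → S)) (x : ℕ → S) : Set S :=
  { s | ∃ (m : ℕ) (idx : Fin (m + 1) → ℕ) (fs : Fin (m + 1) → S → S),
      StrictMono idx ∧ (∀ a, fs a ∈ F) ∧
      s = finFold (· * ·) m fun a => fs a (x (idx a)) }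

/-- The iterated product `U_k · U_{k-1} · ⋯ · U_1 · U_0` of a sequence of ultrafilters. -/
def iterProd {S : Type*} [Semigroup S] (U : ℕ → Ultrafilter S) : ℕ → Ultrafilter S
  | 0 => U 0
  | k + 1 => uMul (U (k + 1)) (iterProd U (k))

/-!
Coherence gives `map f (U i) = U (m i)` with `m i ≤ i`, so `m 0 = 0`. Since `S_i ∩ f⁻¹(S_{m i})`
lies in `U i`, each layer has a witness `s` with `ℓ (f s) = m i`; comparing witnesses of
consecutive layers, monotonicity and the Lipschitz condition of the regressive map `f` force
`m (i + 1) ∈ {m i, m i + 1}`. Since `f` is a homomorphism, `map f` is multiplicative on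
ultrafilters, so `map f (U_k ⋯ U_0) = U_{m k} ⋯ U_{m 0}`; idempotence collapses each
repeated factor, `U_j · (U_j ⋯ U_0) = U_j ⋯ U_0`, leaving `U_{m k} ⋯ U_0`.
-/

section Ultrafilters

variable {S : Type*} [Semigroup S]

lemma mem_uMul {U V : Ultrafilter S} {A : Set S} :
    A ∈ uMul U V ↔ {s | {t | s * t ∈ A} ∈ V} ∈ U :=
  Iff.rfl

lemma uMul_assoc (U V W : Ultrafilter S) : uMul (uMul U V) W = uMul U (uMul V W) := by
  ext A
  simp only [mem_uMul, Set.mem_ofPred_eq, mul_assoc]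

lemma map_uMul {f : S → S} (hf : ∀ s t : S, f (s * t) = f s * f t) (U V : Ultrafilter S) :
    Ultrafilter.map f (uMul U V) = uMul (Ultrafilter.map f U) (Ultrafilter.map f V) := by
  ext A
  simp only [Ultrafilter.mem_map, mem_uMul, Set.preimage_ofPred_eq, Set.mem_preimage, hf]

lemma iterProd_succ (U : ℕ → Ultrafilter S) (k : ℕ) :
    iterProd U (k + 1) = uMul (U (k + 1)) (iterProd U k) :=
  rfl

lemma uMul_iterProd_of_idempotent {U : ℕ → Ultrafilter S} {j : ℕ}
    (hid : uMul (U j) (U j) = U j) : uMul (U j) (iterProd U j) = iterProd U j := by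
  cases j with
  | zero => exact hid
  | succ p => rw [iterProd_succ, ← uMul_assoc, hid]

lemma map_iterProd_of_map_eq {f : S → S} (hf : ∀ s t : S, f (s * t) = f s * f t)
    {U : ℕ → Ultrafilter S} (hid : ∀ i, uMul (U i) (U i) = U i) {m : ℕ → ℕ}
    (hmap : ∀ i, Ultrafilter.map f (U i) = U (m i)) (hm₀ : m 0 = 0)
    (hstep : ∀ i, m (i + 1) = m i ∨ m (i + 1) = m i + 1) (k : ℕ) :
    Ultrafilter.map f (iterProd U k) = iterProd U (m k) := by
  induction k with
  | zero => rw [hm₀]; exact (hmap 0).trans (congrArg U hm₀)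
  | succ n ih =>
    rw [iterProd_succ, map_uMul hf, hmap, ih]
    rcases hstep n with h | h
    · rw [h, uMul_iterProd_of_idempotent (hid _)]
    · rw [h, iterProd_succ]

end Ultrafilters

section Layers

variable {S : Type*} {ℓ : S → ℕ} {f : S → S} {U : ℕ → Ultrafilter S} {m : ℕ → ℕ}

lemma exists_layer_witness (hlayer : ∀ i, {s : S | ℓ s = i} ∈ U i)
    (hmap : ∀ i, Ultrafilter.map f (U i) = U (m i)) (i : ℕ) :
    ∃ s : S, ℓ s = i ∧ ℓ (f s) = m i := by
  have himage : {s : S | ℓ (f s) = m i} ∈ U i :=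
    Ultrafilter.mem_map.mp (hmap i ▸ hlayer (m i))
  exact Ultrafilter.nonempty_of_mem (Filter.inter_mem (hlayer i) himage)

lemma layer_step_of_isRegressive [Semigroup S] (hf : IsRegressive ℓ f)
    (hlayer : ∀ i, {s : S | ℓ s = i} ∈ U i)
    (hmap : ∀ i, Ultrafilter.map f (U i) = U (m i)) (i : ℕ) :
    m (i + 1) = m i ∨ m (i + 1) = m i + 1 := by
  obtain ⟨-, -, hmono, hlip⟩ := hf
  obtain ⟨s, hs, hfs⟩ := exists_layer_witness hlayer hmap i
  obtain ⟨t, ht, hft⟩ := exists_layer_witness hlayer hmap (i + 1)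
  have hle : m i ≤ m (i + 1) := hfs ▸ hft ▸ hmono s t (by omega)
  have hdist := hlip t s
  rw [hs, hfs, ht, hft, Nat.cast_succ, add_sub_cancel_left, abs_one, abs_le] at hdist
  omega

end Layers

theorem map_iterProd_of_coherent_idempotent_general {S : Type*} [Semigroup S] (ℓ : S → ℕ)
    (F : Set (S → S)) (hreg : ∀ f ∈ F, IsRegressive ℓ f)
    (U : ℕ → Ultrafilter S) (hcoh : FCoherent ℓ F U)
    (hid : ∀ i, uMul (U i) (U i) = U i) :
    ∀ f ∈ F, ∀ k : ℕ, ∃ j ≤ k,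
      Ultrafilter.map f (iterProd U k) = iterProd U j := by
  intro f hf k
  choose m hm hmap using hcoh.2 f hf
  have hstep := layer_step_of_isRegressive (hreg f hf) hcoh.1 hmap
  exact ⟨m k, hm k,
    map_iterProd_of_map_eq (hreg f hf).1 hid hmap (Nat.le_zero.mp (hm 0)) hstep k⟩

/-- If `(U_i)` is an `F`-coherent sequence of idempotent ultrafilters on a layered
semigroup, then for every `f ∈ F` and every `k` there is `j ≤ k` with
`map f (U_k · U_{k-1} · ⋯ · U_0) = U_j · U_{j-1} · ⋯ · U_0`. -/
theorem map_iterProd_of_coherent_idempotent {S : Type*} [Semigroup S] (ℓ : S → ℕ)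
    (hlay : ∀ s t : S, ℓ (s * t) = max (ℓ s) (ℓ t))
    (F : Set (S → S)) (hreg : ∀ f ∈ F, IsRegressive ℓ f)
    (U : ℕ → Ultrafilter S) (hcoh : FCoherent ℓ F U)
    (hid : ∀ i, uMul (U i) (U i) = U i) :
    ∀ f ∈ F, ∀ k : ℕ, ∃ j ≤ k,
      Ultrafilter.map f (iterProd U k) = iterProd U j :=
  map_iterProd_of_coherent_idempotent_general ℓ F hreg U hcoh hid
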